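/- arXiv:2110.03685 — 2 statements merged into one kernel-verified Lean document; each statement's English description precedes it below -/
import Mathlib

section
/- For every real step size τ and every index i, the operator B + (τ²/24) C applied to the coordinate function pᵢ equals −∂/∂qᵢ of the modified potential V_{F2}(q) := V(q) − (τ²/24) |∇V(q)|². Hence B + (τ²/24) C is exactly the momentum-version Lie operator associated with the modified potential V_{F2}, so the force-gradient scheme F2 is the Verlet scheme applied to the modified Hamiltonian H_{F2} = T + V_{F2}. -/
open scoped BigOperators

/-- Partial derivative with respect to the coordinate `qᵢ` of a function on phase space. -/
noncomputable def pder_q {n : ℕ} (F : (Fin n → ℝ) × (Fin n → ℝ) → ℝ)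
    (i : Fin n) (z : (Fin n → ℝ) × (Fin n → ℝ)) : ℝ :=
  fderiv ℝ F z (Pi.single i 1, 0)

/-- Partial derivative with respect to the momentum `pᵢ` of a function on phase space. -/
noncomputable def pder_p {n : ℕ} (F : (Fin n → ℝ) × (Fin n → ℝ) → ℝ)
    (i : Fin n) (z : (Fin n → ℝ) × (Fin n → ℝ)) : ℝ :=
  fderiv ℝ F z (0, Pi.single i 1)

/-- The operator `A F = Σᵢ pᵢ ∂F/∂qᵢ`, associated with `T(p) = |p|²/2`. -/
noncomputable def opA {n : ℕ} (F : (Fin n → ℝ) × (Fin n → ℝ) → ℝ) :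
    (Fin n → ℝ) × (Fin n → ℝ) → ℝ :=
  fun z => ∑ i, z.2 i * pder_q F i z

/-- The operator `B F = −Σᵢ V_{qᵢ} ∂F/∂pᵢ`, associated with the potential `V`. -/
noncomputable def opB {n : ℕ} (V : (Fin n → ℝ) → ℝ)
    (F : (Fin n → ℝ) × (Fin n → ℝ) → ℝ) :
    (Fin n → ℝ) × (Fin n → ℝ) → ℝ :=
  fun z => -∑ i, fderiv ℝ V z.1 (Pi.single i 1) * pder_p F i z

/-- The commutator `[A,B] = A∘B − B∘A`. -/
noncomputable def commAB {n : ℕ} (V : (Fin n → ℝ) → ℝ)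
    (F : (Fin n → ℝ) × (Fin n → ℝ) → ℝ) :
    (Fin n → ℝ) × (Fin n → ℝ) → ℝ :=
  fun z => opA (opB V F) z - opB V (opA F) z

/-- The force-gradient operator `C = [B,[A,B]] = B∘[A,B] − [A,B]∘B`. -/
noncomputable def opC {n : ℕ} (V : (Fin n → ℝ) → ℝ)
    (F : (Fin n → ℝ) × (Fin n → ℝ) → ℝ) :
    (Fin n → ℝ) × (Fin n → ℝ) → ℝ :=
  fun z => opB V (commAB V F) z - commAB V (opB V F) z


/-- The modified potential `V_{F2}(q) = V(q) − (τ²/24) |∇V(q)|²`. -/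
noncomputable def VF2 {n : ℕ} (V : (Fin n → ℝ) → ℝ) (τ : ℝ) : (Fin n → ℝ) → ℝ :=
  fun q => V q - (τ ^ 2 / 24) * ∑ j, (fderiv ℝ V q (Pi.single j 1)) ^ 2

/-! `pᵢ` is linear in `p` and independent of `q`, so `A pᵢ = 0` and `B pᵢ = -V_{qᵢ}`, a function of
`q` alone, which `B` annihilates. Hence `C pᵢ = 2 B [A,B] pᵢ`, and with
`[A,B] pᵢ = -Σⱼ pⱼ V_{qⱼqᵢ}` this is `2 Σₖ V_{qₖ} V_{qₖqᵢ}`. By symmetry of the Hessian this equals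
`∂/∂qᵢ |∇V|²`, which is exactly the correction term in `-∂V_{F2}/∂qᵢ`. -/

lemma fderiv_fderiv_apply_apply {E : Type*} [NormedAddCommGroup E] [NormedSpace ℝ E]
    {f : E → ℝ} {x : E} (hf : DifferentiableAt ℝ (fderiv ℝ f) x) (v w : E) :
    fderiv ℝ (fun y => fderiv ℝ f y v) x w = fderiv ℝ (fderiv ℝ f) x w v := by
  rw [fderiv_clm_apply hf (differentiableAt_const v)]
  simp

section PhaseSpace

variable {n : ℕ}

lemma fderiv_snd_apply_apply (i : Fin n) (z v : (Fin n → ℝ) × (Fin n → ℝ)) :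
    fderiv ℝ (fun w : (Fin n → ℝ) × (Fin n → ℝ) => w.2 i) z v = v.2 i := by
  have h : HasFDerivAt (fun w : (Fin n → ℝ) × (Fin n → ℝ) => w.2 i)
      ((ContinuousLinearMap.proj i).comp (ContinuousLinearMap.snd ℝ _ _)) z :=
    (hasFDerivAt_apply (𝕜 := ℝ) i z.2).comp z (hasFDerivAt_snd (𝕜 := ℝ) (p := z))
  rw [h.fderiv]
  rfl

lemma fderiv_comp_fst_apply {g : (Fin n → ℝ) → ℝ} {z : (Fin n → ℝ) × (Fin n → ℝ)}
    (hg : DifferentiableAt ℝ g z.1) (v : (Fin n → ℝ) × (Fin n → ℝ)) :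
    fderiv ℝ (fun w : (Fin n → ℝ) × (Fin n → ℝ) => g w.1) z v = fderiv ℝ g z.1 v.1 := by
  have h : HasFDerivAt (fun w : (Fin n → ℝ) × (Fin n → ℝ) => g w.1)
      ((fderiv ℝ g z.1).comp (ContinuousLinearMap.fst ℝ _ _)) z :=
    hg.hasFDerivAt.comp z (hasFDerivAt_fst (𝕜 := ℝ) (p := z))
  rw [h.fderiv]
  rfl

lemma pder_p_snd (i j : Fin n) (z : (Fin n → ℝ) × (Fin n → ℝ)) :
    pder_p (fun w => w.2 i) j z = (Pi.single j 1 : Fin n → ℝ) i :=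
  fderiv_snd_apply_apply i z _

lemma pder_q_snd (i j : Fin n) (z : (Fin n → ℝ) × (Fin n → ℝ)) :
    pder_q (fun w => w.2 i) j z = 0 :=
  fderiv_snd_apply_apply i z _

lemma pder_p_sum_snd_mul_comp_fst {g : Fin n → (Fin n → ℝ) → ℝ}
    {z : (Fin n → ℝ) × (Fin n → ℝ)} (hg : ∀ j, DifferentiableAt ℝ (g j) z.1) (k : Fin n) :
    pder_p (fun w => ∑ j, w.2 j * g j w.1) k z = g k z.1 := by
  have hsnd : ∀ j, DifferentiableAt ℝ (fun w : (Fin n → ℝ) × (Fin n → ℝ) => w.2 j) z :=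
    fun j => by fun_prop
  have hfst : ∀ j, DifferentiableAt ℝ (fun w : (Fin n → ℝ) × (Fin n → ℝ) => g j w.1) z :=
    fun j => (hg j).comp z differentiableAt_fst
  rw [pder_p, fderiv_fun_sum fun j _ => (hsnd j).fun_mul (hfst j)]
  simp [fderiv_fun_mul (hsnd _) (hfst _), fderiv_snd_apply_apply, fderiv_comp_fst_apply (hg _),
    Pi.single_apply]

variable {V : (Fin n → ℝ) → ℝ} {g : (Fin n → ℝ) → ℝ}

lemma opA_zero : opA (0 : (Fin n → ℝ) × (Fin n → ℝ) → ℝ) = 0 := by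
  funext z
  simp [opA, pder_q]

lemma opB_zero : opB V (0 : (Fin n → ℝ) × (Fin n → ℝ) → ℝ) = 0 := by
  funext z
  simp [opB, pder_p]

lemma opA_snd (i : Fin n) : opA (fun w : (Fin n → ℝ) × (Fin n → ℝ) => w.2 i) = 0 := by
  funext z
  simp [opA, pder_q_snd]

lemma opB_snd (i : Fin n) :
    opB V (fun w => w.2 i) = fun z => -fderiv ℝ V z.1 (Pi.single i 1) := by
  funext z
  simp [opB, pder_p_snd, Pi.single_apply]

lemma opA_comp_fst (hg : Differentiable ℝ g) :
    opA (fun w => g w.1) = fun z => ∑ j, z.2 j * fderiv ℝ g z.1 (Pi.single j 1) := by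
  funext z
  simp [opA, pder_q, fderiv_comp_fst_apply (hg _)]

lemma opB_comp_fst (hg : Differentiable ℝ g) : opB V (fun w => g w.1) = 0 := by
  funext z
  simp [opB, pder_p, fderiv_comp_fst_apply (hg _)]

lemma opB_sum_snd_mul_comp_fst {g : Fin n → (Fin n → ℝ) → ℝ} (hg : ∀ j, Differentiable ℝ (g j)) :
    opB V (fun w => ∑ j, w.2 j * g j w.1) =
      fun z => -∑ k, fderiv ℝ V z.1 (Pi.single k 1) * g k z.1 := by
  funext z
  simp [opB, pder_p_sum_snd_mul_comp_fst fun j => hg j _]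

lemma opC_eq_two_mul_opB_commAB {F : (Fin n → ℝ) × (Fin n → ℝ) → ℝ} (hA : opA F = 0)
    (hBB : opB V (opB V F) = 0) (z : (Fin n → ℝ) × (Fin n → ℝ)) :
    opC V F z = 2 * opB V (commAB V F) z := by
  have hcomm : commAB V F = opA (opB V F) := by
    funext w
    simp [commAB, hA, opB_zero]
  rw [opC, hcomm, commAB, hBB, opA_zero, Pi.zero_apply]
  ring

end PhaseSpace

section ForceGradient

variable {n : ℕ} {V : (Fin n → ℝ) → ℝ}

lemma commAB_snd (hV : Differentiable ℝ (fderiv ℝ V)) (i : Fin n) :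
    commAB V (fun w => w.2 i) = fun z =>
      ∑ j, z.2 j * -fderiv ℝ (fderiv ℝ V) z.1 (Pi.single j 1) (Pi.single i 1) := by
  have hVi : Differentiable ℝ fun q => -fderiv ℝ V q (Pi.single i 1) := by fun_prop
  funext z
  rw [commAB, opA_snd, opB_zero, opB_snd, opA_comp_fst hVi]
  simp [fderiv_fun_neg, fderiv_fderiv_apply_apply (hV _)]

-- `C³`, not `C²`: `pder_p` is a total derivative, junk (`0`) unless `[A,B] pᵢ`, which involves
-- the Hessian of `V`, is differentiable.
lemma opC_snd (hV : ContDiff ℝ 3 V) (i : Fin n) (z : (Fin n → ℝ) × (Fin n → ℝ)) :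
    opC V (fun w => w.2 i) z = 2 * ∑ k, fderiv ℝ V z.1 (Pi.single k 1) *
      fderiv ℝ (fderiv ℝ V) z.1 (Pi.single k 1) (Pi.single i 1) := by
  have hD1 : Differentiable ℝ (fderiv ℝ V) :=
    (hV.fderiv_right (m := 2) (by norm_num)).differentiable (by norm_num)
  have hD2 : Differentiable ℝ (fderiv ℝ (fderiv ℝ V)) :=
    ((hV.fderiv_right (m := 2) (by norm_num)).fderiv_right (m := 1) (by norm_num)).differentiable
      (by norm_num)
  have hBB : opB V (opB V (fun w => w.2 i)) = 0 := by
    rw [opB_snd]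
    exact opB_comp_fst (g := fun q => -fderiv ℝ V q (Pi.single i 1)) (by fun_prop)
  rw [opC_eq_two_mul_opB_commAB (opA_snd i) hBB, commAB_snd hD1,
    opB_sum_snd_mul_comp_fst
      (g := fun j q => -fderiv ℝ (fderiv ℝ V) q (Pi.single j 1) (Pi.single i 1)) (by fun_prop)]
  simp

lemma fderiv_VF2_apply (hV : ContDiff ℝ 2 V) (τ : ℝ) (q v : Fin n → ℝ) :
    fderiv ℝ (VF2 V τ) q v = fderiv ℝ V q v - τ ^ 2 / 24 *
      (2 * ∑ k, fderiv ℝ V q (Pi.single k 1) * fderiv ℝ (fderiv ℝ V) q (Pi.single k 1) v) := by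
  have hD1 : Differentiable ℝ (fderiv ℝ V) :=
    (hV.fderiv_right (m := 1) le_rfl).differentiable one_ne_zero
  have hVd : Differentiable ℝ V := hV.differentiable two_ne_zero
  have hsymm : IsSymmSndFDerivAt ℝ V q :=
    hV.contDiffAt.isSymmSndFDerivAt (by simp [minSmoothness_of_isRCLikeNormedField])
  have hsq : ∀ k, DifferentiableAt ℝ (fun q => fderiv ℝ V q (Pi.single k 1) ^ 2) q :=
    fun k => by fun_prop
  unfold VF2
  rw [fderiv_fun_sub (hVd q) (by fun_prop), fderiv_const_mul (by fun_prop),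
    fderiv_fun_sum fun k _ => hsq k]
  simp [fderiv_fun_pow 2 ((hD1 q).clm_apply (differentiableAt_const _)),
    fderiv_fderiv_apply_apply (hD1 q), hsymm v, Finset.mul_sum, mul_assoc]

end ForceGradient

/-- `(B + (τ²/24) C) pᵢ = −∂V_{F2}/∂qᵢ`: the operator `B + (τ²/24) C` is exactly the
momentum-version Lie operator associated with the modified potential `V_{F2}`, so the
force-gradient scheme F2 is the Verlet scheme for the modified Hamiltonian
`H_{F2} = T + V_{F2}`. -/
theorem modified_potential_F2 {n : ℕ} (V : (Fin n → ℝ) → ℝ)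
    (hV : ContDiff ℝ (⊤ : ℕ∞) V) (τ : ℝ) (i : Fin n) (q p : Fin n → ℝ) :
    opB V (fun w => w.2 i) (q, p) + (τ ^ 2 / 24) * opC V (fun w => w.2 i) (q, p) =
      -fderiv ℝ (VF2 V τ) q (Pi.single i 1) ∧
    opB V (fun w => w.2 i) (q, p) + (τ ^ 2 / 24) * opC V (fun w => w.2 i) (q, p) =
      opB (VF2 V τ) (fun w => w.2 i) (q, p) := by
  have hV3 : ContDiff ℝ 3 V := hV.of_le (WithTop.coe_le_coe.mpr le_top)
  have hforce : opB V (fun w => w.2 i) (q, p) + (τ ^ 2 / 24) * opC V (fun w => w.2 i) (q, p) =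
      -fderiv ℝ (VF2 V τ) q (Pi.single i 1) := by
    rw [opB_snd, opC_snd hV3, fderiv_VF2_apply (hV3.of_le (by norm_num))]
    ring
  exact ⟨hforce, by rw [hforce, opB_snd]⟩
end

section
/- Let U : ℝⁿ → ℝ be twice continuously differentiable and let τ ∈ ℝ. The leapfrog (Verlet) map Φ^U_τ is symplectic: at every point (q,p), its derivative, as a linear map on ℝⁿ × ℝⁿ, preserves the canonical symplectic form ω, i.e. ω(DΦ^U_τ(q,p) u, DΦ^U_τ(q,p) v) = ω(u,v) for all tangent vectors u, v. -/
/-!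
Leapfrog is the composition kick ∘ drift ∘ kick of the half-kicks `(q, p) ↦ (q, p - (τ/2)∇U(q))`
and the linear drift `(q, p) ↦ (q + τ p, p)`. By the chain rule its derivative is a product of
shears `(a, b) ↦ (a, b - H a)` and `(a, b) ↦ (a + S b, b)` with `H = (τ/2)∇²U` and `S = τ·1`
symmetric; the Hessian is symmetric because `U` is `C²`. A shear by a symmetric matrix preserves
`ω`, as the two cross terms `⟨a, H a'⟩` and `⟨a', H a⟩` it introduces cancel.
-/

open scoped BigOperators

/-- The gradient `∇U` of a function `U : ℝⁿ → ℝ`, taken componentwise. -/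
noncomputable def grad {n : ℕ} (U : (Fin n → ℝ) → ℝ) (q : Fin n → ℝ) : Fin n → ℝ :=
  fun i => fderiv ℝ U q (Pi.single i 1)

/-- The leapfrog (Verlet) map `Φ^U_τ(q,p) = (Q,P)` with
`p⁺ = p − (τ/2)∇U(q)`, `Q = q + τ p⁺`, `P = p⁺ − (τ/2)∇U(Q)`. -/
noncomputable def leapfrog {n : ℕ} (U : (Fin n → ℝ) → ℝ) (τ : ℝ)
    (z : (Fin n → ℝ) × (Fin n → ℝ)) : (Fin n → ℝ) × (Fin n → ℝ) :=
  let pplus := z.2 - (τ / 2) • grad U z.1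
  let Q := z.1 + τ • pplus
  (Q, pplus - (τ / 2) • grad U Q)

/-- The canonical symplectic form `ω((δq,δp),(δq',δp')) = ⟨δq,δp'⟩ − ⟨δq',δp⟩` on ℝⁿ × ℝⁿ. -/
noncomputable def omegaForm {n : ℕ} (u v : (Fin n → ℝ) × (Fin n → ℝ)) : ℝ :=
  (∑ i, u.1 i * v.2 i) - ∑ i, v.1 i * u.2 i

open scoped Matrix

section Symplectic

variable {n : ℕ}

theorem omegaForm_eq_dotProduct (u v : (Fin n → ℝ) × (Fin n → ℝ)) :
    omegaForm u v = u.1 ⬝ᵥ v.2 - v.1 ⬝ᵥ u.2 :=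
  rfl

def PreservesOmega (L : ((Fin n → ℝ) × (Fin n → ℝ)) →L[ℝ] ((Fin n → ℝ) × (Fin n → ℝ))) :
    Prop :=
  ∀ u v, omegaForm (L u) (L v) = omegaForm u v

theorem PreservesOmega.comp {L M : ((Fin n → ℝ) × (Fin n → ℝ)) →L[ℝ] ((Fin n → ℝ) × (Fin n → ℝ))}
    (hL : PreservesOmega L) (hM : PreservesOmega M) : PreservesOmega (L.comp M) := by
  intro u v
  rw [L.comp_apply, L.comp_apply, hL, hM]

def lowerShear (H : (Fin n → ℝ) →L[ℝ] (Fin n → ℝ)) :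
    ((Fin n → ℝ) × (Fin n → ℝ)) →L[ℝ] ((Fin n → ℝ) × (Fin n → ℝ)) :=
  (ContinuousLinearMap.fst ℝ _ _).prod
    (ContinuousLinearMap.snd ℝ _ _ - H.comp (ContinuousLinearMap.fst ℝ _ _))

def upperShear (S : (Fin n → ℝ) →L[ℝ] (Fin n → ℝ)) :
    ((Fin n → ℝ) × (Fin n → ℝ)) →L[ℝ] ((Fin n → ℝ) × (Fin n → ℝ)) :=
  (ContinuousLinearMap.fst ℝ _ _ + S.comp (ContinuousLinearMap.snd ℝ _ _)).prod
    (ContinuousLinearMap.snd ℝ _ _)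

@[simp]
theorem lowerShear_apply (H : (Fin n → ℝ) →L[ℝ] (Fin n → ℝ)) (u : (Fin n → ℝ) × (Fin n → ℝ)) :
    lowerShear H u = (u.1, u.2 - H u.1) :=
  rfl

@[simp]
theorem upperShear_apply (S : (Fin n → ℝ) →L[ℝ] (Fin n → ℝ)) (u : (Fin n → ℝ) × (Fin n → ℝ)) :
    upperShear S u = (u.1 + S u.2, u.2) :=
  rfl

theorem preservesOmega_lowerShear {H : (Fin n → ℝ) →L[ℝ] (Fin n → ℝ)}
    (hH : ∀ a b, a ⬝ᵥ H b = b ⬝ᵥ H a) : PreservesOmega (lowerShear H) := by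
  intro u v
  simp only [omegaForm_eq_dotProduct, lowerShear_apply, dotProduct_sub, hH u.1 v.1]
  ring

theorem preservesOmega_upperShear {S : (Fin n → ℝ) →L[ℝ] (Fin n → ℝ)}
    (hS : ∀ a b, a ⬝ᵥ S b = b ⬝ᵥ S a) : PreservesOmega (upperShear S) := by
  intro u v
  simp only [omegaForm_eq_dotProduct, upperShear_apply, add_dotProduct, dotProduct_comm (S _),
    hS v.2 u.2]
  ring

end Symplectic

section Gradient

variable {n : ℕ} {U : (Fin n → ℝ) → ℝ} {q : Fin n → ℝ}

noncomputable def dualCoeffs (n : ℕ) : ((Fin n → ℝ) →L[ℝ] ℝ) →L[ℝ] (Fin n → ℝ) :=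
  ContinuousLinearMap.pi fun i => ContinuousLinearMap.apply ℝ ℝ (Pi.single i 1)

theorem dotProduct_dualCoeffs (ℓ : (Fin n → ℝ) →L[ℝ] ℝ) (a : Fin n → ℝ) :
    a ⬝ᵥ dualCoeffs n ℓ = ℓ a := by
  have hsingle (i : Fin n) : Pi.single i (a i) = a i • (Pi.single i 1 : Fin n → ℝ) := by
    rw [← Pi.single_smul', smul_eq_mul, mul_one]
  conv_rhs => rw [← Finset.univ_sum_single a]
  simp only [map_sum, hsingle, map_smul, smul_eq_mul]
  rfl

theorem grad_eq_comp (U : (Fin n → ℝ) → ℝ) : grad U = dualCoeffs n ∘ fderiv ℝ U :=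
  rfl

theorem differentiableAt_grad (hU : ContDiffAt ℝ 2 U q) : DifferentiableAt ℝ (grad U) q :=
  (dualCoeffs n).differentiableAt.comp q ((hU.fderiv_right le_rfl).differentiableAt one_ne_zero)

theorem dotProduct_fderiv_grad (hU : ContDiffAt ℝ 2 U q) (a b : Fin n → ℝ) :
    a ⬝ᵥ fderiv ℝ (grad U) q b = fderiv ℝ (fderiv ℝ U) q b a := by
  have hDU : DifferentiableAt ℝ (fderiv ℝ U) q :=
    (hU.fderiv_right le_rfl).differentiableAt one_ne_zero
  rw [grad_eq_comp, fderiv_comp q (dualCoeffs n).differentiableAt hDU,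
    ContinuousLinearMap.fderiv, ContinuousLinearMap.comp_apply, dotProduct_dualCoeffs]

theorem dotProduct_fderiv_grad_comm (hU : ContDiffAt ℝ 2 U q) (a b : Fin n → ℝ) :
    a ⬝ᵥ fderiv ℝ (grad U) q b = b ⬝ᵥ fderiv ℝ (grad U) q a := by
  rw [dotProduct_fderiv_grad hU, dotProduct_fderiv_grad hU, hU.isSymmSndFDerivAt (by simp)]

end Gradient

section Leapfrog

variable {n : ℕ}

noncomputable def kick (U : (Fin n → ℝ) → ℝ) (c : ℝ) (z : (Fin n → ℝ) × (Fin n → ℝ)) :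
    (Fin n → ℝ) × (Fin n → ℝ) :=
  (z.1, z.2 - c • grad U z.1)

theorem leapfrog_eq_kick_comp_drift_comp_kick (U : (Fin n → ℝ) → ℝ) (τ : ℝ) :
    leapfrog U τ = kick U (τ / 2) ∘ upperShear (τ • 1) ∘ kick U (τ / 2) :=
  rfl

theorem hasFDerivAt_kick {U : (Fin n → ℝ) → ℝ} {z : (Fin n → ℝ) × (Fin n → ℝ)}
    (hgrad : DifferentiableAt ℝ (grad U) z.1) (c : ℝ) :
    HasFDerivAt (kick U c) (lowerShear (c • fderiv ℝ (grad U) z.1)) z :=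
  hasFDerivAt_fst.prodMk <| hasFDerivAt_snd.sub <|
    (hgrad.hasFDerivAt.comp z hasFDerivAt_fst).const_smul c

theorem preservesOmega_fderiv_kick {U : (Fin n → ℝ) → ℝ} {q : Fin n → ℝ}
    (hU : ContDiffAt ℝ 2 U q) (c : ℝ) :
    PreservesOmega (lowerShear (c • fderiv ℝ (grad U) q)) :=
  preservesOmega_lowerShear fun a b => by
    simp only [_root_.smul_apply, dotProduct_smul, dotProduct_fderiv_grad_comm hU a b]

theorem preservesOmega_drift (τ : ℝ) :
    PreservesOmega (upperShear (τ • 1 : (Fin n → ℝ) →L[ℝ] _)) :=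
  preservesOmega_upperShear fun a b => by
    simp only [_root_.smul_apply, one_apply_eq_self, dotProduct_smul, dotProduct_comm a b]

end Leapfrog

/-- The leapfrog (Verlet) map is symplectic: at every point its derivative preserves the
canonical symplectic form. -/
theorem leapfrog_symplectic {n : ℕ} (U : (Fin n → ℝ) → ℝ) (hU : ContDiff ℝ 2 U) (τ : ℝ)
    (z u v : (Fin n → ℝ) × (Fin n → ℝ)) :
    omegaForm (fderiv ℝ (leapfrog U τ) z u) (fderiv ℝ (leapfrog U τ) z v) =
      omegaForm u v := by
  have hkick (w : (Fin n → ℝ) × (Fin n → ℝ)) :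
      HasFDerivAt (kick U (τ / 2)) (lowerShear ((τ / 2) • fderiv ℝ (grad U) w.1)) w :=
    hasFDerivAt_kick (differentiableAt_grad hU.contDiffAt) _
  have hΦ := (hkick _).comp z ((upperShear (τ • 1)).hasFDerivAt.comp z (hkick z))
  rw [leapfrog_eq_kick_comp_drift_comp_kick, hΦ.fderiv]
  exact ((preservesOmega_fderiv_kick hU.contDiffAt _).comp
    ((preservesOmega_drift τ).comp (preservesOmega_fderiv_kick hU.contDiffAt _))) u v
end
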